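/- Let G be a DAG on X satisfying path-cluster-comparability (PCC), and let I be a set of integers with 1 ∈ I. Then G has the I-lca-property if and only if the cluster system 𝔠_G is pre-I-ary. -/
import Mathlib


open Relation

variable {V : Type*}

/-- A directed graph given by an edge relation `E` is acyclic if it has no directed cycle. -/
def DagAcyclic (E : V → V → Prop) : Prop := ∀ v, ¬ Relation.TransGen E v v

/-- A leaf is a vertex with no out-neighbours (no children). -/
def DagLeaf (E : V → V → Prop) (v : V) : Prop := ∀ u, ¬ E v u

/-- A root is a vertex with no in-neighbours (no parents). -/
def DagRoot (E : V → V → Prop) (v : V) : Prop := ∀ u, ¬ E u v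

/-- `Descends E u v` means `u ≤_G v`: there is a directed path from `v` down to `u`. -/
def Descends (E : V → V → Prop) (u v : V) : Prop := Relation.ReflTransGen E v u

/-- `StrictDescends E u v` means `u <_G v` (a nonempty directed path from `v` down to `u`;
in an acyclic digraph this is exactly `u ≤_G v ∧ u ≠ v`). -/
def StrictDescends (E : V → V → Prop) (u v : V) : Prop := Relation.TransGen E v u

/-- The cluster `C_G(v)`: the set of leaves that are descendants of `v`. -/
def dagCluster (E : V → V → Prop) (v : V) : Set V := {x | DagLeaf E x ∧ Descends E x v}

/-- The cluster system `𝔠_G = {C_G(v) : v ∈ V(G)}`. -/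
def dagClusters (E : V → V → Prop) : Set (Set V) := Set.range (dagCluster E)

/-- `v` is a common ancestor of `A`. -/
def IsCA (E : V → V → Prop) (A : Set V) (v : V) : Prop := ∀ a ∈ A, Descends E a v

/-- `v` is a least common ancestor of `A`: a `≤_G`-minimal common ancestor of `A`. -/
def IsLCA (E : V → V → Prop) (A : Set V) (v : V) : Prop :=
  IsCA E A v ∧ ∀ u, IsCA E A u → ¬ StrictDescends E u v

/-- `lca_G(A)` is well-defined and equal to `v`: `v` is the unique LCA of `A`. -/
def IsUniqueLCA (E : V → V → Prop) (A : Set V) (v : V) : Prop :=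
  IsLCA E A v ∧ ∀ w, IsLCA E A w → w = v

/-- `C` is an inclusion-minimal member of `𝔠` containing `A`. -/
def IsMinContaining (𝔠 : Set (Set V)) (A C : Set V) : Prop :=
  C ∈ 𝔠 ∧ A ⊆ C ∧ ∀ D ∈ 𝔠, A ⊆ D → D ⊆ C → D = C

/-- `C` is the unique inclusion-minimal member of `𝔠` containing `A`. -/
def IsUniqueMin (𝔠 : Set (Set V)) (A C : Set V) : Prop :=
  IsMinContaining 𝔠 A C ∧ ∀ D, IsMinContaining 𝔠 A D → D = C

/-- Two sets overlap: their intersection is nonempty and neither contains the other. -/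
def SetsOverlap (M M' : Set V) : Prop := (M ∩ M').Nonempty ∧ ¬ M ⊆ M' ∧ ¬ M' ⊆ M

/-- The edge relation of the Hasse diagram of a set system `𝔠`: an edge from `A` to `B`
iff `B ⊊ A` and no `C ∈ 𝔠` lies strictly in between. -/
def HasseE {X : Type*} (𝔠 : Set (Set X)) (A B : ↥𝔠) : Prop :=
  B.1 ⊂ A.1 ∧ ∀ C ∈ 𝔠, ¬ (B.1 ⊂ C ∧ C ⊂ A.1)

/-- The edge relation of `G ⊖ v`: on vertices distinct from `v`, keep the old edges and
add an edge from each parent of `v` to each child of `v`. -/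
def ominus (E : V → V → Prop) (v : V) (p q : V) : Prop :=
  p ≠ v ∧ q ≠ v ∧ (E p q ∨ (E p v ∧ E v q))


section Helpers

lemma descends_trans {E : V → V → Prop} {x u w : V} (h1 : Descends E x u)
    (h2 : Descends E u w) : Descends E x w :=
  Relation.ReflTransGen.trans h2 h1

lemma cluster_mono {E : V → V → Prop} {u w : V} (h : Descends E u w) :
    dagCluster E u ⊆ dagCluster E w := fun _ hx => ⟨hx.1, descends_trans hx.2 h⟩

lemma isCA_of_subset_cluster {E : V → V → Prop} {A : Set V} {w : V}
    (h : A ⊆ dagCluster E w) : IsCA E A w := fun a ha => (h ha).2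

lemma subset_cluster_of_isCA {E : V → V → Prop} {A : Set V} {w : V}
    (hA : ∀ a ∈ A, DagLeaf E a) (h : IsCA E A w) : A ⊆ dagCluster E w :=
  fun a ha => ⟨hA a ha, h a ha⟩

lemma strict_of_descends_ne {E : V → V → Prop} {u v : V}
    (h : Descends E u v) (hne : u ≠ v) : StrictDescends E u v := by
  rcases (Relation.reflTransGen_iff_eq_or_transGen.mp h) with h' | h'
  · exact absurd h' hne
  · exact h'

/-- below any common ancestor there is a least common ancestor. -/
lemma exists_lca_below [Fintype V] {E : V → V → Prop} (hE : DagAcyclic E)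
    {A : Set V} {w : V} (hw : IsCA E A w) :
    ∃ v, IsLCA E A v ∧ Descends E v w := by
  letI : IsTrans V (fun a b => Relation.TransGen E b a) :=
    ⟨fun a b c h1 h2 => Relation.TransGen.trans h2 h1⟩
  letI : IsIrrefl V (fun a b => Relation.TransGen E b a) := ⟨fun a => hE a⟩
  have hwf := Finite.wellFounded_of_trans_of_irrefl (fun a b : V => Relation.TransGen E b a)
  obtain ⟨v, ⟨hvCA, hvw⟩, hmin⟩ :=
    hwf.has_min {u | IsCA E A u ∧ Descends E u w} ⟨w, hw, Relation.ReflTransGen.refl⟩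
  refine ⟨v, ⟨hvCA, fun u hu hsd => ?_⟩, hvw⟩
  exact hmin u ⟨hu, descends_trans hsd.to_reflTransGen hvw⟩ hsd

end Helpers

/-- for a DAG satisfying (PCC), the `I`-lca-property holds iff the
cluster system is pre-`I`-ary. -/
theorem stmt11 [Fintype V] (E : V → V → Prop) (hE : DagAcyclic E)
    (hPCC : ∀ u v : V, (Descends E u v ∨ Descends E v u) ↔
      (dagCluster E u ⊆ dagCluster E v ∨ dagCluster E v ⊆ dagCluster E u))
    (I : Set ℕ) (h1 : 1 ∈ I) (hI : I ⊆ Set.Icc 1 (Set.ncard {v | DagLeaf E v})) :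
    (∀ A : Set V, (∀ a ∈ A, DagLeaf E a) → A.ncard ∈ I → ∃ v, IsUniqueLCA E A v) ↔
    (∀ A : Set V, (∀ a ∈ A, DagLeaf E a) → A.ncard ∈ I →
      ∃ C, IsUniqueMin (dagClusters E) A C) := by
  have hleafcl : ∀ v : V, dagCluster E v ∈ dagClusters E := fun v => ⟨v, rfl⟩
  constructor
  · -- lca property → pre-I-ary
    intro h A hA hcard
    obtain ⟨v, hv⟩ := h A hA hcard
    have key : ∀ w : V, A ⊆ dagCluster E w → dagCluster E v ⊆ dagCluster E w := by
      intro w hw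
      obtain ⟨u, huLCA, huw⟩ := exists_lca_below hE (isCA_of_subset_cluster hw)
      have : u = v := hv.2 u huLCA
      exact cluster_mono (this ▸ huw)
    have hAC : A ⊆ dagCluster E v := subset_cluster_of_isCA hA hv.1.1
    refine ⟨dagCluster E v, ⟨⟨hleafcl v, hAC, ?_⟩, ?_⟩⟩
    · rintro D ⟨w, rfl⟩ hAD hDC
      exact le_antisymm hDC (key w hAD)
    · rintro D ⟨⟨w, rfl⟩, hAD, hDmin⟩
      exact (hDmin _ (hleafcl v) hAC (key w hAD)).symm
  · -- pre-I-ary → lca property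
    intro h A hA hcard
    have hA1 : 1 ≤ A.ncard := (hI hcard).1
    have hAne : A.Nonempty := Set.nonempty_of_ncard_ne_zero (by omega)
    obtain ⟨C, hC⟩ := h A hA hcard
    obtain ⟨w, rfl⟩ := hC.1.1
    have hwCA : IsCA E A w := isCA_of_subset_cluster hC.1.2.1
    obtain ⟨u, huLCA, huw⟩ := exists_lca_below hE hwCA
    -- any LCA z has cluster equal to C
    have clEq : ∀ z : V, IsLCA E A z → dagCluster E z = dagCluster E w := by
      intro z hz
      have hAz : A ⊆ dagCluster E z := subset_cluster_of_isCA hA hz.1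
      -- find a minimal cluster between A and C(z)
      letI : IsTrans (Set V) (· ⊂ ·) := inferInstance
      have hwf := Finite.wellFounded_of_trans_of_irrefl (α := Set V) (· ⊂ ·)
      obtain ⟨D, ⟨hD𝔠, hAD, hDz⟩, hDmin⟩ := hwf.has_min
        {D | D ∈ dagClusters E ∧ A ⊆ D ∧ D ⊆ dagCluster E z}
        ⟨dagCluster E z, hleafcl z, hAz, subset_rfl⟩
      have hDminC : IsMinContaining (dagClusters E) A D := by
        refine ⟨hD𝔠, hAD, fun D' hD' hAD' hD'D => ?_⟩
        by_contra hne
        exact hDmin D' ⟨hD', hAD', hD'D.trans hDz⟩ (ssubset_of_subset_of_ne hD'D hne)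
      have hDC : D = dagCluster E w := hC.2 D hDminC
      have hCz : dagCluster E w ⊆ dagCluster E z := hDC ▸ hDz
      -- PCC: z and w comparable
      rcases (hPCC z w).mpr (Or.inr hCz) with hzw | hwz
      · exact le_antisymm (cluster_mono hzw) hCz
      · by_cases hwez : w = z
        · rw [hwez]
        · exact absurd (strict_of_descends_ne hwz hwez) (hz.2 w hwCA)
    refine ⟨u, huLCA, fun z hz => ?_⟩
    have hclu : dagCluster E z = dagCluster E u := (clEq z hz).trans (clEq u huLCA).symm
    by_contra hne
    rcases (hPCC z u).mpr (Or.inl hclu.le) with hzu | huz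
    · exact huLCA.2 z hz.1 (strict_of_descends_ne hzu hne)
    · exact hz.2 u huLCA.1 (strict_of_descends_ne huz (fun e => hne e.symm))
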